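/- For every integer n ≥ 7 and every real p with 1 + 4/(n−2) ≤ p < 2, the Case (C1) exponents satisfy 0 ≤ 1/r ≤ 1/r_0 ≤ (n−3)/(2(n−1)); that is, with σ = (n−1)/2, both (2, r) and (2, r_0) satisfy 1/2 ≤ σ(1/2 − 1/r) and 1/2 ≤ σ(1/2 − 1/r_0), so both pairs are σ-admissible. -/
import Mathlib


/-- For every integer `n ≥ 7` and every real `1 + 4/(n−2) ≤ p < 2`, the Case
(C1) exponents satisfy `0 ≤ 1/r ≤ 1/r_0 ≤ (n−3)/(2(n−1))`; with `σ = (n−1)/2`,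
both `(2, r)` and `(2, r_0)` satisfy the σ-admissibility inequalities
`1/2 ≤ σ(1/2 − 1/r)` and `1/2 ≤ σ(1/2 − 1/r_0)`. -/
theorem stmt11 (n : ℕ) (hn : 7 ≤ n) (p : ℝ)
    (hp1 : 1 + 4 / ((n : ℝ) - 2) ≤ p) (hp2 : p < 2) :
    let invr : ℝ := (1 / (n : ℝ)) * (2 / (p - 1) - 1 / 2);
    let invr0 : ℝ := ((n : ℝ) - 5) / (2 * (n : ℝ)) + 1 / ((n : ℝ) - 2)
      - p / ((n : ℝ) * ((n : ℝ) - 2));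
    let σ : ℝ := ((n : ℝ) - 1) / 2;
    0 ≤ invr ∧ invr ≤ invr0 ∧ invr0 ≤ ((n : ℝ) - 3) / (2 * ((n : ℝ) - 1)) ∧
    1 / 2 ≤ σ * (1 / 2 - invr) ∧ 1 / 2 ≤ σ * (1 / 2 - invr0) := by
  intro invr invr0 σ
  have hN : (7 : ℝ) ≤ (n : ℝ) := by exact_mod_cast hn
  have hn2 : (0 : ℝ) < (n : ℝ) - 2 := by linarith
  have hn0 : (0 : ℝ) < (n : ℝ) := by linarith
  have hn1 : (0 : ℝ) < (n : ℝ) - 1 := by linarith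
  have hkey : 4 ≤ (p - 1) * ((n : ℝ) - 2) := by
    have h : 4 / ((n : ℝ) - 2) ≤ p - 1 := by linarith
    calc (4 : ℝ) = (4 / ((n : ℝ) - 2)) * ((n : ℝ) - 2) := by field_simp
    _ ≤ (p - 1) * ((n : ℝ) - 2) := mul_le_mul_of_nonneg_right h hn2.le
  have hp1' : (0 : ℝ) < p - 1 := by
    have h4 : (0 : ℝ) < 4 / ((n : ℝ) - 2) := by positivity
    linarith
  have hpl1 : p - 1 < 1 := by linarith
  have h1 : 0 ≤ invr := by
    have h2 : (2 : ℝ) ≤ 2 / (p - 1) := by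
      rw [le_div_iff₀ hp1']; nlinarith
    have : (0 : ℝ) ≤ 2 / (p - 1) - 1 / 2 := by linarith
    positivity
  have h2 : invr ≤ invr0 := by
    rw [← sub_nonneg]
    have heq : invr0 - invr =
        ((p - 1) * (((n:ℝ))^2 - 4*(n:ℝ) + 8) - 2*(p-1)^2 - 2*(p-1)
          - 4*(n:ℝ) + 8) / (2 * (n:ℝ) * ((n:ℝ) - 2) * (p - 1)) := by
      show (((n : ℝ) - 5) / (2 * (n : ℝ)) + 1 / ((n : ℝ) - 2)
        - p / ((n : ℝ) * ((n : ℝ) - 2)))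
        - (1 / (n : ℝ)) * (2 / (p - 1) - 1 / 2) = _
      field_simp
      ring
    rw [heq]
    apply div_nonneg _ (by positivity)
    nlinarith [mul_nonneg (sub_nonneg.2 hpl1.le) (sub_nonneg.2 hkey),
      mul_nonneg (sub_nonneg.2 hkey) (by linarith : (0:ℝ) ≤ (n:ℝ) - 7),
      mul_nonneg hp1'.le (by linarith : (0:ℝ) ≤ (n:ℝ) - 7),
      mul_pos hp1' hn2]
  have h3 : invr0 ≤ ((n : ℝ) - 3) / (2 * ((n : ℝ) - 1)) := by
    rw [← sub_nonneg]
    have heq : ((n : ℝ) - 3) / (2 * ((n : ℝ) - 1)) - invr0 =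
        (2*p*((n:ℝ) - 1) + (n:ℝ)^2 - 9*(n:ℝ) + 10)
          / (2 * (n:ℝ) * ((n:ℝ) - 2) * ((n:ℝ) - 1)) := by
      show ((n : ℝ) - 3) / (2 * ((n : ℝ) - 1)) -
        (((n : ℝ) - 5) / (2 * (n : ℝ)) + 1 / ((n : ℝ) - 2)
          - p / ((n : ℝ) * ((n : ℝ) - 2))) = _
      field_simp
      ring
    rw [heq]
    apply div_nonneg _ (by positivity)
    nlinarith [mul_pos hp1' hn1, mul_nonneg (by linarith : (0:ℝ) ≤ (n:ℝ) - 7) hn0.le]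
  have hσeq : σ * (1 / 2 - ((n : ℝ) - 3) / (2 * ((n : ℝ) - 1))) = 1 / 2 := by
    show ((n : ℝ) - 1) / 2 * _ = _
    field_simp
    ring
  have hσ0 : 0 ≤ σ := by show (0:ℝ) ≤ ((n:ℝ) - 1)/2; linarith
  have hadm : ∀ x : ℝ, x ≤ ((n : ℝ) - 3) / (2 * ((n : ℝ) - 1)) →
      1 / 2 ≤ σ * (1 / 2 - x) := by
    intro x hx
    have := mul_le_mul_of_nonneg_left (by linarith : 1 / 2 - ((n : ℝ) - 3) / (2 * ((n : ℝ) - 1)) ≤ 1 / 2 - x) hσ0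
    linarith [hσeq]
  exact ⟨h1, h2, h3, hadm invr (le_trans h2 h3), hadm invr0 h3⟩
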